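/- The closed linear span in L²(ℚ_p, μ) of the set of all ultrametric wavelets is all of L²(ℚ_p, μ). Equivalently, if f ∈ L²(ℚ_p, μ) satisfies ∫ f(x) · conj(ψ(x)) dμ(x) = 0 for every ultrametric wavelet ψ, then f = 0 almost everywhere. -/

import Mathlib

open MeasureTheory

/-- The index (base-`p` logarithm of the radius) of the smallest ball of `ℚ_[p]`
containing the two points `x` and `y` (for `x ≠ y`): its radius is `‖x - y‖ = p ^ (-(x-y).valuation)`. -/
noncomputable def supIdx {p : ℕ} [Fact p.Prime] (x y : ℚ_[p]) : ℤ := -(x - y).valuation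

/-- The index of the smallest ball containing the three points `x`, `ξ`, `η`
(for pairwise distinct points): its radius is `max (‖x-ξ‖, ‖x-η‖, ‖ξ-η‖)`. -/
noncomputable def sup3Idx {p : ℕ} [Fact p.Prime] (x ξ η : ℚ_[p]) : ℤ :=
  max (supIdx x ξ) (max (supIdx x η) (supIdx ξ η))

/-- A ball kernel: a function on balls of `ℚ_[p]`, encoded as a function of a center and
an index (log_p of the radius), independent of the choice of center in the ball. -/
def IsBallKernel {p : ℕ} [Fact p.Prime] (F : ℚ_[p] → ℤ → ℂ) : Prop :=
  ∀ c c' : ℚ_[p], ∀ γ : ℤ, dist c c' ≤ (p : ℝ) ^ γ → F c γ = F c' γ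

/-- Summability of a ball kernel: for every ball `B(c, p^γ₀)`,
`Σ_{γ > γ₀} ‖F(B(c, p^γ))‖ (p^γ - p^(γ-1)) < ∞`. -/
def KernelSummable {p : ℕ} [Fact p.Prime] (F : ℚ_[p] → ℤ → ℂ) : Prop :=
  ∀ c : ℚ_[p], ∀ γ₀ : ℤ, Summable (fun n : ℕ =>
    ‖F c (γ₀ + 1 + n)‖ * ((p : ℝ) ^ (γ₀ + 1 + (n : ℤ)) - (p : ℝ) ^ (γ₀ + (n : ℤ))))

/-- An ultrametric wavelet with ball `B(c, p^γ)`: vanishes outside the ball, is constant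
on each of the `p` maximal subballs (balls of radius `p^(γ-1)`), has zero mean, and is
not identically zero. -/
def IsWavelet {p : ℕ} [Fact p.Prime] [MeasurableSpace ℚ_[p]] (μ : Measure ℚ_[p])
    (ψ : ℚ_[p] → ℂ) (c : ℚ_[p]) (γ : ℤ) : Prop :=
  (∀ x, (p : ℝ) ^ γ < dist x c → ψ x = 0) ∧
    (∀ x y, dist x y ≤ (p : ℝ) ^ (γ - 1) → ψ x = ψ y) ∧
    (∫ x, ψ x ∂μ) = 0 ∧ ψ ≠ 0

/-- The eigenvalue `λ_I = T(I) ν(I) + Σ_{J > I} T(J) (ν(J) - ν(J,I))` attached to the ball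
`I = B(c, p^γI)` and the ball kernel `T`. -/
noncomputable def lamBall {p : ℕ} [Fact p.Prime] (T : ℚ_[p] → ℤ → ℂ) (c : ℚ_[p]) (γI : ℤ) : ℂ :=
  T c γI * (((p : ℝ) ^ γI : ℝ) : ℂ) +
    ∑' n : ℕ, T c (γI + 1 + n) *
      (((p : ℝ) ^ (γI + 1 + (n : ℤ)) - (p : ℝ) ^ (γI + (n : ℤ)) : ℝ) : ℂ)

/-- The coefficient `Φ_{I,J}` for balls `J = B(c, p^γJ) ⊊ I = B(c, p^γI)`. -/
noncomputable def PhiIJ {p : ℕ} [Fact p.Prime] (F : ℚ_[p] → ℤ → ℂ) (c : ℚ_[p])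
    (γI γJ : ℤ) : ℂ :=
  (((p : ℝ) ^ (2 * (γI - 1)) : ℝ) : ℂ) * F c γI - (((p : ℝ) ^ (2 * γJ) : ℝ) : ℂ) * F c γJ -
    ∑ γ ∈ Finset.Ioo γJ γI, (((p : ℝ) ^ (2 * γ) - (p : ℝ) ^ (2 * γ - 2) : ℝ) : ℂ) * F c γ

/-- The (spatial) operator of the quadratic cascade equation:
`∫∫ F(sup(x,ξ,η)) f(ξ)(f(η) - f(x)) dμ(ξ) dμ(η) + ∫ G(sup(x,ξ))(f(x) - f(ξ)) dμ(ξ)`. -/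
noncomputable def cascadeOp {p : ℕ} [Fact p.Prime] [MeasurableSpace ℚ_[p]]
    (μ : Measure ℚ_[p]) (F G : ℚ_[p] → ℤ → ℂ) (f : ℚ_[p] → ℂ) (x : ℚ_[p]) : ℂ :=
  (∫ ξ, ∫ η, F x (sup3Idx x ξ η) * (f ξ * (f η - f x)) ∂μ ∂μ) +
    ∫ ξ, G x (supIdx x ξ) * (f x - f ξ) ∂μ

/-- `v` satisfies the quadratic cascade equation
`∂ₜ v(x,t) + ∫∫ F(sup(x,ξ,η)) v(ξ,t)(v(η,t) - v(x,t)) dμ(ξ) dμ(η)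
  + ∫ G(sup(x,ξ))(v(x,t) - v(ξ,t)) dμ(ξ) = 0` for all `x ∈ ℚ_p` and all `t > 0`. -/
def SatisfiesCascade {p : ℕ} [Fact p.Prime] [MeasurableSpace ℚ_[p]]
    (μ : Measure ℚ_[p]) (F G : ℚ_[p] → ℤ → ℂ) (v : ℚ_[p] → ℝ → ℂ) : Prop :=
  ∀ x : ℚ_[p], ∀ t : ℝ, 0 < t →
    HasDerivAt (fun s => v x s) (-(cascadeOp μ F G (fun y => v y t) x)) t

/-!
Orthogonality of `f` to the wavelet `1_{B(c, p^(γ-1))} - p⁻¹ 1_{B(c, p^γ)}` says that the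
integral of `f` over a ball is `p⁻¹` times its integral over the parent ball. Iterating, the
integral over `B(c, p^γ)` is `p^(-n)` times the one over `B(c, p^(γ+n))`, which by Cauchy–Schwarz
is at most `‖f‖₂ (p^n μ(B(c, p^γ)))^(1/2)`; hence every ball integral of `f` vanishes. A ball is
the disjoint union of `p` translates of a maximal subball, so Haar measure is doubling, and
Lebesgue's differentiation theorem turns the vanishing ball averages into `f = 0` a.e.
-/

open Metric Filter
open scoped ENNReal

lemma norm_setIntegral_le_eLpNorm_two_mul_sqrt {α E : Type*} [MeasurableSpace α]
    [NormedAddCommGroup E] [NormedSpace ℝ E] {μ : Measure α} {f : α → E} (hf : MemLp f 2 μ)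
    {s : Set α} (hs : μ s ≠ ∞) :
    ‖∫ x in s, f x ∂μ‖ ≤ (eLpNorm f 2 μ).toReal * √(μ.real s) := by
  have holder : eLpNorm f 1 (μ.restrict s) ≤ eLpNorm f 2 μ * μ s ^ (1 / 2 : ℝ) := by
    have h := eLpNorm_le_eLpNorm_mul_rpow_measure_univ (μ := μ.restrict s) one_le_two
      (hf.restrict s).aestronglyMeasurable
    rw [Measure.restrict_apply_univ] at h
    norm_num at h
    exact h.trans (mul_le_mul_left (eLpNorm_restrict_le f 2 μ s) _)
  calc ‖∫ x in s, f x ∂μ‖ ≤ (eLpNorm f 1 (μ.restrict s)).toReal := by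
        rw [eLpNorm_one_eq_lintegral_enorm]
        exact (norm_integral_le_lintegral_norm f).trans_eq (by simp_rw [ofReal_norm])
    _ ≤ (eLpNorm f 2 μ * μ s ^ (1 / 2 : ℝ)).toReal :=
        ENNReal.toReal_mono (ENNReal.mul_ne_top hf.2.ne (by simp [hs])) holder
    _ = (eLpNorm f 2 μ).toReal * √(μ.real s) := by
        rw [ENNReal.toReal_mul, ← ENNReal.toReal_rpow, Real.sqrt_eq_rpow, measureReal_def]

lemma IsUltrametricDist.mem_closedBall_iff_of_dist_le {X : Type*} [PseudoMetricSpace X]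
    [IsUltrametricDist X] {x y c : X} {r : ℝ} (hxy : dist x y ≤ r) :
    x ∈ closedBall c r ↔ y ∈ closedBall c r := by
  rw [mem_closedBall_comm, mem_closedBall_comm (x := y),
    closedBall_eq_of_mem (mem_closedBall'.2 hxy)]

lemma ae_eq_zero_of_forall_setIntegral_closedBall_eq_zero {α E : Type*} [PseudoMetricSpace α]
    [SecondCountableTopology α] [MeasurableSpace α] [BorelSpace α] {μ : Measure α}
    [IsLocallyFiniteMeasure μ] [IsUnifLocDoublingMeasure μ] [NormedAddCommGroup E]
    [NormedSpace ℝ E] [CompleteSpace E] {f : α → E} (hf : LocallyIntegrable f μ)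
    (h : ∀ x r, 0 < r → ∫ y in closedBall x r, f y ∂μ = 0) : f =ᵐ[μ] 0 := by
  filter_upwards [IsUnifLocDoublingMeasure.ae_tendsto_average μ hf 1] with x hx
  refine tendsto_nhds_unique (hx (fun _ => x) id tendsto_id ?_) ?_
  · filter_upwards [self_mem_nhdsWithin] with r (hr : 0 < r)
    simpa using hr.le
  · refine tendsto_const_nhds.congr' ?_
    filter_upwards [self_mem_nhdsWithin] with r (hr : 0 < r)
    rw [id, setAverage_eq, h x r hr, smul_zero, Pi.zero_apply]

namespace Padic

variable {p : ℕ} [hp : Fact p.Prime]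

variable (p) in
lemma one_lt_p : (1 : ℝ) < p := mod_cast hp.out.one_lt

lemma norm_mul_p_zpow_neg_le_iff (y : ℚ_[p]) (γ : ℤ) :
    ‖y * (p : ℚ_[p]) ^ (-γ)‖ ≤ (p : ℝ) ^ (γ - 1) ↔ ‖y‖ < 1 := by
  have hp0 : (0 : ℝ) < p := zero_lt_one.trans (one_lt_p p)
  rw [norm_mul, norm_p_zpow, neg_neg, sub_eq_add_neg, zpow_add₀ hp0.ne', mul_comm ‖y‖,
    mul_le_mul_iff_of_pos_left (zpow_pos hp0 γ), norm_le_pow_iff_norm_lt_pow_add_one]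
  simp

lemma exists_lt_norm_sub_natCast_mul_le {x : ℚ_[p]} {γ : ℤ} (hx : ‖x‖ ≤ (p : ℝ) ^ γ) :
    ∃ j < p, ‖x - j * (p : ℚ_[p]) ^ (-γ)‖ ≤ (p : ℝ) ^ (γ - 1) := by
  have hp0 : (p : ℚ_[p]) ≠ 0 := mod_cast hp.out.ne_zero
  have hu : ‖x * (p : ℚ_[p]) ^ γ‖ ≤ 1 := by
    rw [norm_mul, norm_p_zpow, zpow_neg]
    exact mul_inv_le_one_of_le₀ hx (by positivity)
  obtain ⟨j, hj, hmem⟩ := PadicInt.exists_mem_range (⟨_, hu⟩ : ℤ_[p])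
  rw [IsLocalRing.mem_maximalIdeal, PadicInt.mem_nonunits] at hmem
  have hlt : ‖x * (p : ℚ_[p]) ^ γ - j‖ < 1 := hmem
  refine ⟨j, hj, ?_⟩
  rwa [← norm_mul_p_zpow_neg_le_iff _ γ, sub_mul, mul_assoc, ← zpow_add₀ hp0, add_neg_cancel,
    zpow_zero, mul_one] at hlt

lemma closedBall_eq_closedBall_zpow_floor_logb (x : ℚ_[p]) {r : ℝ} (hr : 0 < r) :
    closedBall x r = closedBall x ((p : ℝ) ^ ⌊Real.logb p r⌋) := by
  have zpow_le_iff (k : ℤ) : (p : ℝ) ^ k ≤ r ↔ k ≤ ⌊Real.logb p r⌋ := by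
    rw [Int.le_floor, Real.le_logb_iff_rpow_le (one_lt_p p) hr, Real.rpow_intCast]
  refine Set.Subset.antisymm (fun y hy => ?_)
    (closedBall_subset_closedBall ((zpow_le_iff _).2 le_rfl))
  rw [mem_closedBall, dist_eq_norm] at hy ⊢
  rcases eq_or_ne y x with rfl | hne
  · simp only [sub_self, norm_zero]; positivity
  · rw [norm_eq_zpow_neg_valuation (sub_ne_zero.2 hne)] at hy ⊢
    exact zpow_le_zpow_right₀ (one_lt_p p).le ((zpow_le_iff _).1 hy)

lemma eq_of_norm_natCast_mul_sub_le {j k : ℕ} (hj : j < p) (hk : k < p) {γ : ℤ}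
    (h : ‖(j : ℚ_[p]) * (p : ℚ_[p]) ^ (-γ) - k * (p : ℚ_[p]) ^ (-γ)‖ ≤ (p : ℝ) ^ (γ - 1)) :
    j = k := by
  rw [← sub_mul, norm_mul_p_zpow_neg_le_iff, norm_sub_rev] at h
  have h' : ‖(((k : ℤ) - j : ℤ) : ℚ_[p])‖ < 1 := by push_cast; exact h
  have hdvd := norm_intCast_lt_one_iff.1 h'
  exact Nat.ModEq.eq_of_lt_of_lt (Nat.modEq_iff_dvd.2 hdvd) hj hk

lemma closedBall_zero_zpow_eq_biUnion (γ : ℤ) :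
    closedBall (0 : ℚ_[p]) ((p : ℝ) ^ γ) =
      ⋃ j ∈ Finset.range p, closedBall ((j : ℚ_[p]) * (p : ℚ_[p]) ^ (-γ)) ((p : ℝ) ^ (γ - 1)) := by
  refine Set.Subset.antisymm (fun x hx => ?_) (Set.iUnion₂_subset fun j _ => ?_)
  · rw [mem_closedBall, dist_zero_right] at hx
    obtain ⟨j, hj, hxj⟩ := exists_lt_norm_sub_natCast_mul_le hx
    exact Set.mem_biUnion (Finset.mem_coe.2 (Finset.mem_range.2 hj)) hxj
  · have hcenter : (j : ℚ_[p]) * (p : ℚ_[p]) ^ (-γ) ∈ closedBall 0 ((p : ℝ) ^ γ) := by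
      rw [mem_closedBall, dist_zero_right, norm_mul, norm_p_zpow, neg_neg]
      exact mul_le_of_le_one_left (by positivity) (IsUltrametricDist.norm_natCast_le_one ℚ_[p] j)
    rw [IsUltrametricDist.closedBall_eq_of_mem hcenter]
    exact closedBall_subset_closedBall (zpow_le_zpow_right₀ (one_lt_p p).le (by omega))

lemma pairwiseDisjoint_closedBall_natCast_mul (γ : ℤ) :
    (Finset.range p : Set ℕ).PairwiseDisjoint
      fun j => closedBall ((j : ℚ_[p]) * (p : ℚ_[p]) ^ (-γ)) ((p : ℝ) ^ (γ - 1)) := by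
  intro j hj k hk hne
  refine Set.disjoint_left.2 fun x hxj hxk => hne ?_
  refine eq_of_norm_natCast_mul_sub_le (Finset.mem_range.1 hj) (Finset.mem_range.1 hk) (γ := γ) ?_
  rw [← dist_eq_norm]
  exact (dist_triangle_max _ x _).trans (max_le (mem_closedBall'.1 hxj) hxk)

noncomputable def ballWavelet (c : ℚ_[p]) (γ : ℤ) (x : ℚ_[p]) : ℂ :=
  (closedBall c ((p : ℝ) ^ (γ - 1))).indicator (fun _ => 1) x -
    (p : ℂ)⁻¹ * (closedBall c ((p : ℝ) ^ γ)).indicator (fun _ => 1) x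

lemma mul_ballWavelet (f : ℚ_[p] → ℂ) (c : ℚ_[p]) (γ : ℤ) (x : ℚ_[p]) :
    f x * ballWavelet c γ x = (closedBall c ((p : ℝ) ^ (γ - 1))).indicator f x -
      (p : ℂ)⁻¹ * (closedBall c ((p : ℝ) ^ γ)).indicator f x := by
  simp only [ballWavelet, Set.indicator]
  split_ifs <;> ring

lemma conj_ballWavelet (c : ℚ_[p]) (γ : ℤ) (x : ℚ_[p]) :
    starRingEnd ℂ (ballWavelet c γ x) = ballWavelet c γ x := by
  simp only [ballWavelet, Set.indicator]
  split_ifs <;> simp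

variable [MeasurableSpace ℚ_[p]] [BorelSpace ℚ_[p]] (μ : Measure ℚ_[p])

lemma integral_mul_conj_ballWavelet {f : ℚ_[p] → ℂ} (hf : LocallyIntegrable f μ) (c : ℚ_[p])
    (γ : ℤ) :
    ∫ x, f x * starRingEnd ℂ (ballWavelet c γ x) ∂μ =
      (∫ x in closedBall c ((p : ℝ) ^ (γ - 1)), f x ∂μ) -
        (p : ℂ)⁻¹ * ∫ x in closedBall c ((p : ℝ) ^ γ), f x ∂μ := by
  have hint (r : ℝ) : Integrable ((closedBall c r).indicator f) μ :=
    (hf.integrableOn_isCompact (isCompact_closedBall c r)).integrable_indicator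
      measurableSet_closedBall
  simp only [conj_ballWavelet, mul_ballWavelet]
  rw [integral_sub (hint _) ((hint _).const_mul _), integral_const_mul,
    integral_indicator measurableSet_closedBall, integral_indicator measurableSet_closedBall]

variable [μ.IsAddHaarMeasure]

lemma measure_closedBall_zpow (c : ℚ_[p]) (γ : ℤ) :
    μ (closedBall c ((p : ℝ) ^ γ)) = p * μ (closedBall c ((p : ℝ) ^ (γ - 1))) := by
  rw [Measure.addHaar_closedBall_center, closedBall_zero_zpow_eq_biUnion,
    measure_biUnion_finset (pairwiseDisjoint_closedBall_natCast_mul γ)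
      fun _ _ => measurableSet_closedBall]
  simp [Measure.addHaar_closedBall_center μ _ ((p : ℝ) ^ (γ - 1))]

lemma measure_closedBall_zpow_add (c : ℚ_[p]) (γ : ℤ) (n : ℕ) :
    μ (closedBall c ((p : ℝ) ^ (γ + n))) = p ^ n * μ (closedBall c ((p : ℝ) ^ γ)) := by
  induction n with
  | zero => simp
  | succ n ih =>
    rw [measure_closedBall_zpow, Nat.cast_succ, ← add_assoc, add_sub_cancel_right, ih, pow_succ,
      mul_comm _ (p : ℝ≥0∞), mul_assoc]

lemma measureReal_closedBall_zpow_add (c : ℚ_[p]) (γ : ℤ) (n : ℕ) :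
    μ.real (closedBall c ((p : ℝ) ^ (γ + n))) = p ^ n * μ.real (closedBall c ((p : ℝ) ^ γ)) := by
  simp [measureReal_def, measure_closedBall_zpow_add, ENNReal.toReal_mul]

instance isUnifLocDoublingMeasure : IsUnifLocDoublingMeasure μ := by
  refine ⟨⟨(p : NNReal) ^ 2, ?_⟩⟩
  filter_upwards [self_mem_nhdsWithin] with ε (hε : 0 < ε) x
  set γ := ⌊Real.logb p ε⌋
  have h2ε : 2 * ε ≤ (p : ℝ) ^ (γ + (2 : ℕ)) := by
    have hε_lt : ε < (p : ℝ) ^ (γ + 1) := by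
      rw [← Real.rpow_intCast, ← Real.logb_lt_iff_lt_rpow (one_lt_p p) hε]
      push_cast
      exact Int.lt_floor_add_one _
    have hp2 : (2 : ℝ) ≤ p := mod_cast hp.out.two_le
    rw [Nat.cast_two, show γ + 2 = γ + 1 + 1 by ring, zpow_add_one₀ (by positivity)]
    nlinarith [zpow_pos (zero_lt_one.trans (one_lt_p p)) (γ + 1)]
  calc μ (closedBall x (2 * ε)) ≤ μ (closedBall x ((p : ℝ) ^ (γ + (2 : ℕ)))) :=
        measure_mono (closedBall_subset_closedBall h2ε)
    _ = (p : NNReal) ^ 2 * μ (closedBall x ε) := by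
        rw [measure_closedBall_zpow_add, ← closedBall_eq_closedBall_zpow_floor_logb x hε]
        norm_cast

lemma integral_ballWavelet (c : ℚ_[p]) (γ : ℤ) : ∫ x, ballWavelet c γ x ∂μ = 0 := by
  have hint (r : ℝ) : Integrable ((closedBall c r).indicator fun _ => (1 : ℂ)) μ :=
    (integrableOn_const measure_closedBall_lt_top.ne).integrable_indicator measurableSet_closedBall
  have hmeas : μ.real (closedBall c ((p : ℝ) ^ γ)) =
      p * μ.real (closedBall c ((p : ℝ) ^ (γ - 1))) := by
    rw [measureReal_def, measure_closedBall_zpow, ENNReal.toReal_mul, ENNReal.toReal_natCast,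
      measureReal_def]
  have hp0 : (p : ℂ) ≠ 0 := mod_cast hp.out.ne_zero
  simp only [ballWavelet]
  rw [integral_sub (hint _) ((hint _).const_mul _), integral_const_mul,
    integral_indicator_const _ measurableSet_closedBall,
    integral_indicator_const _ measurableSet_closedBall, hmeas]
  simp only [Complex.real_smul, mul_one]
  push_cast
  field_simp
  ring

lemma isWavelet_ballWavelet (c : ℚ_[p]) (γ : ℤ) : IsWavelet μ (ballWavelet c γ) c γ := by
  have hp0 : (0 : ℝ) < p := zero_lt_one.trans (one_lt_p p)
  have hsub : (p : ℝ) ^ (γ - 1) ≤ (p : ℝ) ^ γ := zpow_le_zpow_right₀ (one_lt_p p).le (by omega)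
  refine ⟨fun x hx => ?_, fun x y hxy => ?_, integral_ballWavelet μ c γ, fun h => ?_⟩
  · have h1 : x ∉ closedBall c ((p : ℝ) ^ (γ - 1)) := fun h => hx.not_ge (h.trans hsub)
    have h2 : x ∉ closedBall c ((p : ℝ) ^ γ) := fun h => hx.not_ge h
    simp [ballWavelet, h1, h2]
  · classical
    simp [ballWavelet, Set.indicator_apply, IsUltrametricDist.mem_closedBall_iff_of_dist_le hxy,
      IsUltrametricDist.mem_closedBall_iff_of_dist_le (hxy.trans hsub)]
  · have hc := congrFun h c
    simp only [ballWavelet, Set.indicator_of_mem (mem_closedBall_self (zpow_pos hp0 _).le),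
      Pi.zero_apply, sub_eq_zero, mul_one] at hc
    exact (one_lt_p p).ne' (by exact_mod_cast (inv_eq_one.1 hc.symm))

lemma setIntegral_closedBall_zpow_eq_zero {f : ℚ_[p] → ℂ} (hf : MemLp f 2 μ) {c : ℚ_[p]}
    (hrec : ∀ γ : ℤ, ∫ x in closedBall c ((p : ℝ) ^ (γ - 1)), f x ∂μ =
      (p : ℂ)⁻¹ * ∫ x in closedBall c ((p : ℝ) ^ γ), f x ∂μ) (γ : ℤ) :
    ∫ x in closedBall c ((p : ℝ) ^ γ), f x ∂μ = 0 := by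
  set I : ℤ → ℂ := fun γ => ∫ x in closedBall c ((p : ℝ) ^ γ), f x ∂μ
  have hiter (n : ℕ) : I γ = ((p : ℂ)⁻¹) ^ n * I (γ + n) := by
    induction n with
    | zero => simp
    | succ n ih =>
      rw [ih, pow_succ, mul_assoc, ← hrec, Nat.cast_succ, ← add_assoc, add_sub_cancel_right]
  have hp0 : (0 : ℝ) < p := zero_lt_one.trans (one_lt_p p)
  have hsqrt_pow (n : ℕ) : √((p : ℝ) ^ n) = √p ^ n := by
    rw [Real.sqrt_eq_iff_eq_sq (by positivity) (by positivity), ← pow_mul, mul_comm, pow_mul,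
      Real.sq_sqrt hp0.le]
  have hinv_mul_sqrt : (p : ℝ)⁻¹ * √p = (√p)⁻¹ := by
    field_simp
    rw [Real.sq_sqrt hp0.le]
  set C : ℝ := (eLpNorm f 2 μ).toReal * √(μ.real (closedBall c ((p : ℝ) ^ γ)))
  have hbound (n : ℕ) : ‖I γ‖ ≤ C * (√p)⁻¹ ^ n :=
    calc ‖I γ‖ = (p : ℝ)⁻¹ ^ n * ‖I (γ + n)‖ := by
          rw [hiter n, norm_mul, norm_pow, norm_inv, Complex.norm_natCast]
      _ ≤ (p : ℝ)⁻¹ ^ n *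
            ((eLpNorm f 2 μ).toReal * √(μ.real (closedBall c ((p : ℝ) ^ (γ + n))))) :=
          mul_le_mul_of_nonneg_left
            (norm_setIntegral_le_eLpNorm_two_mul_sqrt hf measure_closedBall_lt_top.ne)
            (by positivity)
      _ = C * ((p : ℝ)⁻¹ * √p) ^ n := by
          rw [measureReal_closedBall_zpow_add, Real.sqrt_mul (by positivity), hsqrt_pow]
          ring
      _ = C * (√p)⁻¹ ^ n := by rw [hinv_mul_sqrt]
  have hlim := (tendsto_pow_atTop_nhds_zero_of_lt_one (by positivity)
    (inv_lt_one_of_one_lt₀ (Real.lt_sqrt_of_sq_lt (by simpa using one_lt_p p)))).const_mul C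
  rw [mul_zero] at hlim
  exact norm_le_zero_iff.1 (ge_of_tendsto' hlim hbound)

end Padic

theorem wavelets_complete_general {p : ℕ} [Fact p.Prime]
    [MeasurableSpace ℚ_[p]] [BorelSpace ℚ_[p]]
    (μ : Measure ℚ_[p]) [μ.IsAddHaarMeasure]
    (f : ℚ_[p] → ℂ) (hf : MemLp f 2 μ)
    (horth : ∀ (ψ : ℚ_[p] → ℂ) (c : ℚ_[p]) (γ : ℤ), IsWavelet μ ψ c γ →
      (∫ x, f x * (starRingEnd ℂ) (ψ x) ∂μ) = 0) :
    f =ᵐ[μ] 0 := by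
  have hloc : LocallyIntegrable f μ := hf.locallyIntegrable one_le_two
  have hrec (c : ℚ_[p]) (γ : ℤ) : ∫ x in closedBall c ((p : ℝ) ^ (γ - 1)), f x ∂μ =
      (p : ℂ)⁻¹ * ∫ x in closedBall c ((p : ℝ) ^ γ), f x ∂μ := by
    rw [← sub_eq_zero, ← Padic.integral_mul_conj_ballWavelet μ hloc]
    exact horth _ c γ (Padic.isWavelet_ballWavelet μ c γ)
  refine ae_eq_zero_of_forall_setIntegral_closedBall_eq_zero hloc fun x r hr => ?_
  rw [Padic.closedBall_eq_closedBall_zpow_floor_logb x hr]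
  exact Padic.setIntegral_closedBall_zpow_eq_zero μ hf (hrec x) _

/-- Completeness of the system of ultrametric wavelets in `L²(ℚ_p, μ)`:
if `f ∈ L²(ℚ_p, μ)` is orthogonal to every ultrametric wavelet, then `f = 0` a.e. -/
theorem wavelets_complete {p : ℕ} [Fact p.Prime]
    [MeasurableSpace ℚ_[p]] [BorelSpace ℚ_[p]]
    (μ : Measure ℚ_[p]) [μ.IsAddHaarMeasure] (hμ : μ (Metric.closedBall 0 1) = 1)
    (f : ℚ_[p] → ℂ) (hf : MemLp f 2 μ)
    (horth : ∀ (ψ : ℚ_[p] → ℂ) (c : ℚ_[p]) (γ : ℤ), IsWavelet μ ψ c γ →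
      (∫ x, f x * (starRingEnd ℂ) (ψ x) ∂μ) = 0) :
    f =ᵐ[μ] 0 :=
  wavelets_complete_general μ f hf horth
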